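/- The generating series O(x,t) = Σ_W x^{e(W)} t^{cl(W)}, summed over all rooted plane (ordered) trees W, where e(W) is the number of edges of W and cl(W) is the number of vertices of W having at least one child which is a leaf, satisfies the functional equation O = (1/(1 − x(O − 1))) · (1 + x·t·(1/(1 − x·O))) in ℚ[[x,t]], and moreover O(x,t) equals the series B(x,t) = Σ_T x^{|T|} t^{hook(T)} summed over all binary trees T. -/

import Mathlib

/-- Binary trees: `leaf` is the empty tree, `node l r` is a vertex with
left subtree `l` and right subtree `r`. -/
inductive BT : Type
  | leaf : BT
  | node : BT → BT → BT
  deriving DecidableEq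

/-- Number of vertices of a binary tree. -/
def BT.size : BT → ℕ
  | leaf => 0
  | node l r => 1 + l.size + r.size

mutual
  /-- The number of hooks in the hook partition of a binary tree: one hook for the
  root, plus the hooks of the trees hanging off the root's hook. -/
  def hookCount : BT → ℕ
    | .leaf => 0
    | .node l r => 1 + hookAuxL l + hookAuxR r
  /-- Total number of hooks of the right subtrees hanging off the leftmost branch. -/
  def hookAuxL : BT → ℕ
    | .leaf => 0
    | .node l r => hookCount r + hookAuxL l
  /-- Total number of hooks of the left subtrees hanging off the rightmost branch. -/
  def hookAuxR : BT → ℕ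
    | .leaf => 0
    | .node l r => hookCount l + hookAuxR r
end
/-- Rooted plane (ordered) trees: a root together with a (linearly ordered, possibly
empty) list of subtrees. -/
inductive PTree : Type
  | node : List PTree → PTree

/-- Number of edges of a rooted plane tree. -/
def PTree.edges : PTree → ℕ
  | .node ts => ts.length + (ts.attach.map (fun x => PTree.edges x.1)).sum
decreasing_by
  have := List.sizeOf_lt_of_mem x.2
  simp only [PTree.node.sizeOf_spec]
  omega

/-- Whether a rooted plane tree is a single vertex (a leaf). -/
def PTree.isLeaf : PTree → Bool
  | .node ts => ts.isEmpty

/-- The number of vertices of a rooted plane tree having at least one child which is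
a leaf. -/
def PTree.cl : PTree → ℕ
  | .node ts => (if ts.any PTree.isLeaf then 1 else 0) + (ts.attach.map (fun x => PTree.cl x.1)).sum
decreasing_by
  have := List.sizeOf_lt_of_mem x.2
  simp only [PTree.node.sizeOf_spec]
  omega

/-- The generating series `B(x,t) = ∑_T x^{|T|} t^{hook(T)}` over all binary trees,
in `ℚ[[x,t]]` with `x = X 0` and `t = X 1`. -/
noncomputable def Bser : MvPowerSeries (Fin 2) ℚ := fun d =>
  (Nat.card {T : BT // T.size = d 0 ∧ hookCount T = d 1} : ℚ)

/-- The generating series `O(x,t) = ∑_W x^{e(W)} t^{cl(W)}` over all rooted plane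
(ordered) trees, in `ℚ[[x,t]]` with `x = X 0` and `t = X 1`: the coefficient of
`xⁿ tᵏ` is the number of plane trees with `n` edges and `cl`-statistic `k`. -/
noncomputable def Oser : MvPowerSeries (Fin 2) ℚ := fun d =>
  (Nat.card {W : PTree // W.edges = d 0 ∧ W.cl = d 1} : ℚ)

/-!
Both series solve `F = 1 + x t / (1 - x F)²`, and this equation has only one solution in
`ℚ[[x,t]]`.

For a binary tree, the hook of the root is its left and its right spine; every spine vertex
other than the root carries one more binary tree, so `B = 1 + x t L R` with
`L = R = 1 / (1 - x B)`.

For a plane tree, the root's subtrees form a sequence, each entry contributing its own edge.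
Splitting by whether one of them is a leaf gives `O = t P + N` and `1 / (1 - x O) = P + N`, where
`N` counts sequences of non-leaves: `N = 1 / (1 - x (O - 1))`. Eliminating `P` yields
`O = N (1 + x t / (1 - x O))`, which rearranges to `(O - 1) (1 - x O)² = x t`.
-/

open MvPowerSeries

section GenSeries

variable {σ R : Type*} [CommSemiring R] {α β γ : Type*}

def FiniteFibers (w : α → β) : Prop := ∀ b, Finite {a // w a = b}

/-- `Nat.card` is `0` on an infinite fiber, so the algebra of these series needs
`FiniteFibers`. -/
noncomputable def genSeries (w : α → σ →₀ ℕ) : MvPowerSeries σ R :=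
  fun d => Nat.card {a // w a = d}

lemma coeff_genSeries (w : α → σ →₀ ℕ) (d : σ →₀ ℕ) :
    coeff d (genSeries w : MvPowerSeries σ R) = Nat.card {a // w a = d} := rfl

lemma FiniteFibers.comp {w : β → γ} (hw : FiniteFibers w) {f : α → β}
    (hf : f.Injective) : FiniteFibers (w ∘ f) := fun b =>
  have := hw b
  Finite.of_injective (fun a : {a // w (f a) = b} => (⟨f a.1, a.2⟩ : {x // w x = b}))
    fun _ _ h => Subtype.ext (hf (congrArg Subtype.val h))

lemma genSeries_comp_equiv (w : β → σ →₀ ℕ) (e : α ≃ β) :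
    (genSeries (w ∘ e) : MvPowerSeries σ R) = genSeries w := by
  ext d
  simp only [coeff_genSeries]
  exact congrArg _ (Nat.card_congr (e.subtypeEquiv fun _ => Iff.rfl))

lemma FiniteFibers.sumElim {u : α → γ} {v : β → γ} (hu : FiniteFibers u)
    (hv : FiniteFibers v) : FiniteFibers (Sum.elim u v) := fun b =>
  have : Finite {a // Sum.elim u v (.inl a) = b} := hu b
  have : Finite {a // Sum.elim u v (.inr a) = b} := hv b
  Finite.of_equiv _ (Equiv.subtypeSum (p := fun x => Sum.elim u v x = b)).symm

lemma genSeries_sumElim {u : α → σ →₀ ℕ} {v : β → σ →₀ ℕ} (hu : FiniteFibers u)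
    (hv : FiniteFibers v) :
    (genSeries (Sum.elim u v) : MvPowerSeries σ R) = genSeries u + genSeries v := by
  ext d
  have : Finite {a // Sum.elim u v (.inl a) = d} := hu d
  have : Finite {a // Sum.elim u v (.inr a) = d} := hv d
  rw [map_add, coeff_genSeries, coeff_genSeries, coeff_genSeries,
    Nat.card_congr (Equiv.subtypeSum (p := fun x => Sum.elim u v x = d)), Nat.card_sum,
    Nat.cast_add]
  rfl

lemma genSeries_const_zero [Unique α] :
    (genSeries (fun _ : α => (0 : σ →₀ ℕ)) : MvPowerSeries σ R) = 1 := by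
  classical
  ext d
  rw [coeff_genSeries, coeff_one]
  split_ifs with h
  · subst h
    simp
  · have : IsEmpty {a : α // 0 = d} := ⟨fun a => h a.2.symm⟩
    simp

lemma FiniteFibers.const_add [Add β] [IsLeftCancelAdd β] {w : α → β} (hw : FiniteFibers w)
    (c : β) : FiniteFibers (fun a => c + w a) := fun b => by
  rcases isEmpty_or_nonempty {a // c + w a = b} with h | ⟨a₀, ha₀⟩
  · infer_instance
  · have := hw (w a₀)
    exact Finite.of_injective
      (fun a => (⟨a.1, add_left_cancel (a.2.trans ha₀.symm)⟩ : {x // w x = w a₀}))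
      fun _ _ h => by simpa [Subtype.ext_iff] using h

lemma monomial_mul_genSeries (c : σ →₀ ℕ) (w : α → σ →₀ ℕ) :
    monomial c 1 * (genSeries w : MvPowerSeries σ R) = genSeries (fun a => c + w a) := by
  ext d
  rw [coeff_monomial_mul, coeff_genSeries, coeff_genSeries]
  split_ifs with h
  · rw [one_mul, Nat.card_congr (Equiv.subtypeEquivRight fun a => ?_)]
    rw [eq_tsub_iff_add_eq_of_le h, add_comm]
  · have : IsEmpty {a // c + w a = d} := ⟨fun a => h (a.2 ▸ le_self_add)⟩
    simp

open Finset in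
def mulFiberEquiv [DecidableEq σ] (u : α → σ →₀ ℕ) (v : β → σ →₀ ℕ) (d : σ →₀ ℕ) :
    {p : α × β // u p.1 + v p.2 = d} ≃
      (q : antidiagonal d) × {a // u a = q.1.1} × {b // v b = q.1.2} where
  toFun p := ⟨⟨(u p.1.1, v p.1.2), mem_antidiagonal.mpr p.2⟩, ⟨p.1.1, rfl⟩, ⟨p.1.2, rfl⟩⟩
  invFun q := ⟨(q.2.1, q.2.2), by rw [q.2.1.2, q.2.2.2]; exact mem_antidiagonal.mp q.1.2⟩
  left_inv _ := rfl
  right_inv := by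
    rintro ⟨⟨⟨x, y⟩, _⟩, ⟨a, ha⟩, ⟨b, hb⟩⟩
    obtain rfl : u a = x := ha
    obtain rfl : v b = y := hb
    rfl

lemma FiniteFibers.mul {u : α → σ →₀ ℕ} {v : β → σ →₀ ℕ} (hu : FiniteFibers u)
    (hv : FiniteFibers v) : FiniteFibers (fun p : α × β => u p.1 + v p.2) := fun d => by
  classical
  have (x : σ →₀ ℕ) : Finite {a // u a = x} := hu x
  have (y : σ →₀ ℕ) : Finite {b // v b = y} := hv y
  exact Finite.of_equiv _ (mulFiberEquiv u v d).symm

lemma genSeries_mul {u : α → σ →₀ ℕ} {v : β → σ →₀ ℕ} (hu : FiniteFibers u)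
    (hv : FiniteFibers v) : (genSeries u * genSeries v : MvPowerSeries σ R) =
      genSeries (fun p : α × β => u p.1 + v p.2) := by
  classical
  ext d
  have (x : σ →₀ ℕ) : Finite {a // u a = x} := hu x
  have (y : σ →₀ ℕ) : Finite {b // v b = y} := hv y
  rw [coeff_mul, coeff_genSeries, Nat.card_congr (mulFiberEquiv u v d), Nat.card_sigma,
    ← Finset.sum_coe_sort]
  push_cast [Nat.card_prod]
  rfl

lemma genSeries_eq_add_compl {w : α → σ →₀ ℕ} (hw : FiniteFibers w) (p : α → Prop) :
    (genSeries w : MvPowerSeries σ R) =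
      genSeries (fun a : {a // p a} => w a) + genSeries (fun a : {a // ¬ p a} => w a) := by
  classical
  rw [← genSeries_sumElim (u := fun a : {a // p a} => w a) (v := fun a : {a // ¬ p a} => w a)
    (hw.comp Subtype.val_injective) (hw.comp Subtype.val_injective),
    ← genSeries_comp_equiv w (Equiv.sumCompl p)]
  congr 1
  funext x
  rcases x with x | x <;> rfl

lemma genSeries_eq_one_add_monomial_mul {u : α → σ →₀ ℕ} {v : β → σ →₀ ℕ}
    {w : γ → σ →₀ ℕ} (hu : FiniteFibers u) (hv : FiniteFibers v) (c : σ →₀ ℕ)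
    (e : Unit ⊕ α × β ≃ γ) (h₀ : w (e (.inl ())) = 0)
    (h₁ : ∀ a b, w (e (.inr (a, b))) = c + (u a + v b)) :
    (genSeries w : MvPowerSeries σ R) = 1 + monomial c 1 * (genSeries u * genSeries v) := by
  have hw : w ∘ e = Sum.elim (fun _ => 0) (fun p => c + (u p.1 + v p.2)) := by
    funext x
    rcases x with ⟨⟩ | ⟨a, b⟩
    exacts [h₀, h₁ a b]
  rw [← genSeries_comp_equiv w e, hw,
    genSeries_sumElim (fun _ => inferInstance) ((hu.mul hv).const_add c), genSeries_const_zero,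
    genSeries_mul hu hv, monomial_mul_genSeries]

end GenSeries

def List.consEquiv (α : Type*) : Unit ⊕ α × List α ≃ List α where
  toFun
    | .inl () => []
    | .inr (a, l) => a :: l
  invFun
    | [] => .inl ()
    | a :: l => .inr (a, l)
  left_inv x := by rcases x with ⟨⟩ | ⟨a, l⟩ <;> rfl
  right_inv l := by rcases l with _ | ⟨a, l⟩ <;> rfl

def List.subtypeEquiv {α : Type*} (p : α → Prop) :
    {l : List α // ∀ a ∈ l, p a} ≃ List (Subtype p) where
  toFun l := l.1.pmap Subtype.mk l.2
  invFun l := ⟨l.map Subtype.val, fun _ h => by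
    obtain ⟨b, -, rfl⟩ := List.mem_map.mp h
    exact b.2⟩
  left_inv l := Subtype.ext (by simp [List.map_pmap])
  right_inv l := by
    induction l with
    | nil => rfl
    | cons a l ih => simpa using ih

lemma List.finite_length_le_of_forall_mem {α : Type*} {S : Set α} (hS : S.Finite) (n : ℕ) :
    {l : List α | l.length ≤ n ∧ ∀ a ∈ l, a ∈ S}.Finite := by
  have := hS.to_subtype
  refine ((List.finite_length_le S n).image (List.map Subtype.val)).subset ?_
  rintro l ⟨hl, hlS⟩
  exact ⟨l.pmap Subtype.mk hlS, by simpa using hl, by simp [List.map_pmap]⟩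

section ListWeight

variable {σ R α : Type*}

noncomputable def listWeight (i : σ) (w : α → σ →₀ ℕ) (l : List α) : σ →₀ ℕ :=
  (l.map fun a => Finsupp.single i 1 + w a).sum

@[simp]
lemma listWeight_nil (i : σ) (w : α → σ →₀ ℕ) : listWeight i w [] = 0 := rfl

@[simp]
lemma listWeight_cons (i : σ) (w : α → σ →₀ ℕ) (a : α) (l : List α) :
    listWeight i w (a :: l) = Finsupp.single i 1 + w a + listWeight i w l := rfl

lemma listWeight_map {β : Type*} (i : σ) (w : β → σ →₀ ℕ) (f : α → β) (l : List α) :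
    listWeight i w (l.map f) = listWeight i (w ∘ f) l := by
  simp [listWeight, Function.comp_def]

lemma length_le_listWeight_apply (i : σ) (w : α → σ →₀ ℕ) (l : List α) :
    l.length ≤ listWeight i w l i := by
  induction l with
  | nil => simp
  | cons a l ih => simp; omega

lemma FiniteFibers.listWeight {w : α → σ →₀ ℕ} (hw : FiniteFibers w) (i : σ) :
    FiniteFibers (listWeight i w) := fun d => by
  classical
  have hS : {a | w a ≤ d}.Finite := by
    refine ((Finset.Iic d).finite_toSet.biUnion fun d' _ =>
      Set.finite_coe_iff.mp (hw d')).subset fun a ha => ?_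
    exact Set.mem_biUnion (Finset.mem_Iic.mpr ha) rfl
  refine ((List.finite_length_le_of_forall_mem hS (d i)).subset ?_).to_subtype
  rintro l rfl
  refine ⟨length_le_listWeight_apply i w l, fun a ha => ?_⟩
  exact le_add_self.trans
    (List.le_sum_of_mem (List.mem_map_of_mem (f := fun a => Finsupp.single i 1 + w a) ha))

lemma genSeries_listWeight_mul [CommRing R] {w : α → σ →₀ ℕ} (hw : FiniteFibers w) (i : σ) :
    (genSeries (listWeight i w) : MvPowerSeries σ R) * (1 - X i * genSeries w) = 1 := by
  have := genSeries_eq_one_add_monomial_mul (R := R) (w := listWeight i w) hw (hw.listWeight i)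
    _ (List.consEquiv α) rfl fun _ _ => add_assoc _ _ _
  rw [← X] at this
  linear_combination this

end ListWeight

section Bidegree

variable {R : Type*} [CommSemiring R]

noncomputable def bideg (m n : ℕ) : Fin 2 →₀ ℕ := Finsupp.single 0 m + Finsupp.single 1 n

lemma bideg_add (m n m' n' : ℕ) : bideg m n + bideg m' n' = bideg (m + m') (n + n') := by
  simp only [bideg, Finsupp.single_add]
  abel

@[simp]
lemma bideg_zero : bideg 0 0 = 0 := by simp [bideg]

lemma bideg_eq_iff {m n : ℕ} {d : Fin 2 →₀ ℕ} : bideg m n = d ↔ m = d 0 ∧ n = d 1 := by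
  constructor
  · rintro rfl
    simp [bideg]
  · rintro ⟨rfl, rfl⟩
    ext i
    fin_cases i <;> simp [bideg]

lemma single_zero_one_eq_bideg : Finsupp.single 0 1 = bideg 1 0 := by simp [bideg]

lemma monomial_bideg (m n : ℕ) : monomial (bideg m n) (1 : R) = X 0 ^ m * X 1 ^ n := by
  rw [X_pow_eq, X_pow_eq, monomial_mul_monomial, one_mul]
  rfl

end Bidegree

namespace PTree

lemma edges_node (ts : List PTree) : (node ts).edges = ts.length + (ts.map edges).sum := by
  rw [edges, ← List.attach_map_val (l := ts) (f := edges)]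

lemma cl_node (ts : List PTree) :
    (node ts).cl = (if ts.any isLeaf then 1 else 0) + (ts.map cl).sum := by
  rw [cl, ← List.attach_map_val (l := ts) (f := cl)]

lemma finite_setOf_edges_le (n : ℕ) : {W : PTree | W.edges ≤ n}.Finite := by
  induction n with
  | zero =>
    refine (Set.finite_singleton (node [])).subset ?_
    rintro ⟨_ | ⟨W, ts⟩⟩ h
    · rfl
    · simp [edges_node] at h
  | succ n ih =>
    refine ((List.finite_length_le_of_forall_mem ih (n + 1)).image node).subset ?_
    rintro ⟨ts⟩ h
    rw [Set.mem_ofPred_eq, edges_node] at h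
    refine ⟨ts, ⟨by omega, fun W hW => ?_⟩, rfl⟩
    have := List.le_sum_of_mem (List.mem_map_of_mem (f := edges) hW)
    have := List.length_pos_of_mem hW
    simp only [Set.mem_ofPred_eq]
    omega

noncomputable def weight (W : PTree) : Fin 2 →₀ ℕ := bideg W.edges W.cl

lemma finiteFibers_weight : FiniteFibers weight := fun d =>
  ((finite_setOf_edges_le (d 0)).subset fun _ h => (bideg_eq_iff.mp h).1.le).to_subtype

lemma listWeight_weight (ts : List PTree) :
    listWeight 0 weight ts = bideg (ts.length + (ts.map edges).sum) (ts.map cl).sum := by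
  induction ts with
  | nil => simp
  | cons W ts ih =>
    simp only [listWeight_cons, ih, weight, single_zero_one_eq_bideg, bideg_add, List.length_cons,
      List.map_cons, List.sum_cons]
    congr 1 <;> ring

lemma weight_node (ts : List PTree) :
    (node ts).weight = (if ts.any isLeaf then bideg 0 1 else 0) + listWeight 0 weight ts := by
  rw [listWeight_weight, weight, edges_node, cl_node]
  split_ifs <;> simp [bideg_add]

def nodeEquiv : List PTree ≃ PTree where
  toFun := node
  invFun | node ts => ts
  left_inv _ := rfl
  right_inv | node _ => rfl

lemma Oser_eq_genSeries : Oser = genSeries weight := by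
  funext d
  exact congrArg Nat.cast (Nat.card_congr (Equiv.subtypeEquivRight
    (q := fun W : PTree => W.weight = d) fun _ => bideg_eq_iff.symm))

instance : Unique {W : PTree // W.isLeaf} where
  default := ⟨node [], rfl⟩
  uniq := by
    rintro ⟨⟨_ | ⟨W, ts⟩⟩, h⟩
    · rfl
    · simp [isLeaf] at h

variable {R : Type*} [CommRing R]

lemma genSeries_weight_eq_one_add :
    (genSeries weight : MvPowerSeries (Fin 2) R) =
      1 + genSeries (fun W : {W : PTree // ¬ W.isLeaf} => W.1.weight) := by
  rw [genSeries_eq_add_compl finiteFibers_weight (fun W => W.isLeaf = true)]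
  have hleaf : (fun W : {W : PTree // W.isLeaf} => W.1.weight) = fun _ => 0 := funext fun W => by
    rw [Unique.eq_default W]
    show (node []).weight = 0
    simp [weight, edges_node, cl_node]
  rw [hleaf, genSeries_const_zero]

lemma genSeries_forest_mul :
    (genSeries (listWeight 0 weight) : MvPowerSeries (Fin 2) R) *
      (1 - X 0 * genSeries weight) = 1 :=
  genSeries_listWeight_mul finiteFibers_weight 0

lemma genSeries_nonleafForest_mul :
    (genSeries (listWeight 0 fun W : {W : PTree // ¬ W.isLeaf} => W.1.weight) :
      MvPowerSeries (Fin 2) R) * (1 - X 0 * (genSeries weight - 1)) = 1 := by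
  rw [genSeries_weight_eq_one_add, add_sub_cancel_left]
  exact genSeries_listWeight_mul (finiteFibers_weight.comp Subtype.val_injective) 0

lemma genSeries_weight_eq :
    (genSeries weight : MvPowerSeries (Fin 2) R) =
      X 1 * genSeries (fun ts : {ts : List PTree // ts.any isLeaf} => listWeight 0 weight ts) +
        genSeries (fun ts : {ts : List PTree // ¬ ts.any isLeaf} => listWeight 0 weight ts) := by
  rw [← genSeries_comp_equiv weight nodeEquiv,
    genSeries_eq_add_compl (finiteFibers_weight.comp nodeEquiv.injective) (fun ts => ts.any isLeaf),
    show X 1 = monomial (bideg 0 1) (1 : R) by simp [monomial_bideg], monomial_mul_genSeries]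
  congr 2 <;> funext ts <;> simp [nodeEquiv, weight_node, ts.2]

lemma genSeries_forest_eq :
    (genSeries (listWeight 0 weight) : MvPowerSeries (Fin 2) R) =
      genSeries (fun ts : {ts : List PTree // ts.any isLeaf} => listWeight 0 weight ts) +
        genSeries (fun ts : {ts : List PTree // ¬ ts.any isLeaf} => listWeight 0 weight ts) :=
  genSeries_eq_add_compl (finiteFibers_weight.listWeight 0) _

lemma genSeries_nonleafForest_eq :
    (genSeries (fun ts : {ts : List PTree // ¬ ts.any isLeaf} => listWeight 0 weight ts) :
      MvPowerSeries (Fin 2) R) =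
      genSeries (listWeight 0 fun W : {W : PTree // ¬ W.isLeaf} => W.1.weight) := by
  let e := (Equiv.subtypeEquivRight (p := fun ts : List PTree => ¬ ts.any isLeaf)
    (q := fun ts => ∀ W ∈ ts, ¬ W.isLeaf) fun ts => by simp).trans
    (List.subtypeEquiv fun W : PTree => ¬ W.isLeaf)
  rw [← genSeries_comp_equiv _ e.symm]
  congr 1
  funext l
  exact listWeight_map 0 weight Subtype.val l

lemma genSeries_weight_eq_mul :
    (genSeries weight : MvPowerSeries (Fin 2) R) =
      genSeries (listWeight 0 fun W : {W : PTree // ¬ W.isLeaf} => W.1.weight) *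
        (1 + X 0 * X 1 * genSeries (listWeight 0 weight)) := by
  have hO := genSeries_weight_eq (R := R)
  have hM := genSeries_forest_eq (R := R)
  have hC := genSeries_forest_mul (R := R)
  have hA := genSeries_nonleafForest_mul (R := R)
  rw [genSeries_nonleafForest_eq] at hO hM
  set M := (genSeries (listWeight 0 weight) : MvPowerSeries (Fin 2) R)
  set N := (genSeries (listWeight 0 fun W : {W : PTree // ¬ W.isLeaf} => W.1.weight) :
    MvPowerSeries (Fin 2) R)
  linear_combination hO - X 1 * hM + X 1 * (N * hC - M * hA)

lemma genSeries_weight_sub_one_mul_sq :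
    ((genSeries weight - 1) * (1 - X 0 * genSeries weight) ^ 2 : MvPowerSeries (Fin 2) R) =
      X 0 * X 1 := by
  have hO := genSeries_weight_eq_mul (R := R)
  have hC := genSeries_forest_mul (R := R)
  have hA := genSeries_nonleafForest_mul (R := R)
  set O := (genSeries weight : MvPowerSeries (Fin 2) R)
  set M := (genSeries (listWeight 0 weight) : MvPowerSeries (Fin 2) R)
  set N := (genSeries (listWeight 0 fun W : {W : PTree // ¬ W.isLeaf} => W.1.weight) :
    MvPowerSeries (Fin 2) R)
  linear_combination (1 - X 0 * O) * ((1 - X 0 * (O - 1)) * hO +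
    (1 + X 0 * X 1 * M) * hA) + X 0 * X 1 * hC

end PTree

namespace BT

lemma finite_setOf_size_le (n : ℕ) : {T : BT | T.size ≤ n}.Finite := by
  induction n with
  | zero =>
    refine (Set.finite_singleton leaf).subset ?_
    rintro (_ | ⟨l, r⟩) h
    · rfl
    · simp [size] at h
  | succ n ih =>
    refine (((ih.prod ih).image fun p => node p.1 p.2).insert leaf).subset ?_
    rintro (_ | ⟨l, r⟩) h
    · exact Set.mem_insert _ _
    · simp only [Set.mem_ofPred_eq, size] at h
      exact Set.mem_insert_of_mem _ ⟨(l, r), ⟨by simp; omega, by simp; omega⟩, rfl⟩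

lemma finiteFibers_bideg_size (f : BT → ℕ) : FiniteFibers fun T => bideg T.size (f T) := fun d =>
  ((finite_setOf_size_le (d 0)).subset fun _ h => (bideg_eq_iff.mp h).1.le).to_subtype

noncomputable def weight (T : BT) : Fin 2 →₀ ℕ := bideg T.size (hookCount T)
noncomputable def leftWeight (T : BT) : Fin 2 →₀ ℕ := bideg T.size (hookAuxL T)
noncomputable def rightWeight (T : BT) : Fin 2 →₀ ℕ := bideg T.size (hookAuxR T)

def nodeEquiv : Unit ⊕ BT × BT ≃ BT where
  toFun
    | .inl () => leaf
    | .inr (l, r) => node l r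
  invFun
    | leaf => .inl ()
    | node l r => .inr (l, r)
  left_inv x := by rcases x with ⟨⟩ | ⟨l, r⟩ <;> rfl
  right_inv T := by rcases T with _ | ⟨l, r⟩ <;> rfl

lemma Bser_eq_genSeries : Bser = genSeries weight := by
  funext d
  exact congrArg Nat.cast (Nat.card_congr (Equiv.subtypeEquivRight
    (q := fun T : BT => T.weight = d) fun _ => bideg_eq_iff.symm))

variable {R : Type*} [CommRing R]

lemma genSeries_weight_eq :
    (genSeries weight : MvPowerSeries (Fin 2) R) =
      1 + X 0 * X 1 * (genSeries leftWeight * genSeries rightWeight) := by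
  rw [show X 0 * X 1 = monomial (bideg 1 1) (1 : R) by simp [monomial_bideg]]
  refine genSeries_eq_one_add_monomial_mul (u := leftWeight) (v := rightWeight)
    (finiteFibers_bideg_size _) (finiteFibers_bideg_size _) _ nodeEquiv
    (by simp [nodeEquiv, weight, size, hookCount]) fun l r => ?_
  simp only [nodeEquiv, Equiv.coe_fn_mk, weight, leftWeight, rightWeight, size, hookCount,
    bideg_add]
  congr 1 <;> ring

lemma genSeries_leftWeight_mul :
    (genSeries leftWeight : MvPowerSeries (Fin 2) R) * (1 - X 0 * genSeries weight) = 1 := by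
  have := genSeries_eq_one_add_monomial_mul (R := R) (u := weight) (v := leftWeight)
    (w := leftWeight)
    (finiteFibers_bideg_size _) (finiteFibers_bideg_size _) (bideg 1 0)
    ((Equiv.sumCongr (Equiv.refl _) (Equiv.prodComm _ _)).trans nodeEquiv)
    (by simp [nodeEquiv, leftWeight, size, hookAuxL]) fun r l => by
      simp only [Equiv.trans_apply, Equiv.sumCongr_apply, Sum.map_inr, Equiv.prodComm_apply,
        Prod.swap_prod_mk, nodeEquiv, Equiv.coe_fn_mk, weight, leftWeight, size, hookAuxL,
        bideg_add]
      congr 1 <;> ring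
  rw [monomial_bideg, pow_one, pow_zero, mul_one] at this
  linear_combination this

lemma genSeries_rightWeight_mul :
    (genSeries rightWeight : MvPowerSeries (Fin 2) R) * (1 - X 0 * genSeries weight) = 1 := by
  have := genSeries_eq_one_add_monomial_mul (R := R) (u := weight) (v := rightWeight)
    (w := rightWeight)
    (finiteFibers_bideg_size _) (finiteFibers_bideg_size _) (bideg 1 0) nodeEquiv
    (by simp [nodeEquiv, rightWeight, size, hookAuxR]) fun l r => by
      simp only [nodeEquiv, Equiv.coe_fn_mk, weight, rightWeight, size, hookAuxR, bideg_add]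
      congr 1 <;> ring
  rw [monomial_bideg, pow_one, pow_zero, mul_one] at this
  linear_combination this

lemma genSeries_weight_sub_one_mul_sq :
    ((genSeries weight - 1) * (1 - X 0 * genSeries weight) ^ 2 : MvPowerSeries (Fin 2) R) =
      X 0 * X 1 := by
  have hB := genSeries_weight_eq (R := R)
  have hL := genSeries_leftWeight_mul (R := R)
  have hR := genSeries_rightWeight_mul (R := R)
  set C := (1 - X 0 * genSeries weight : MvPowerSeries (Fin 2) R)
  linear_combination C ^ 2 * hB + X 0 * X 1 * (genSeries leftWeight * C * hR + hL)

end BT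

lemma MvPowerSeries.eq_of_sub_one_mul_sq_eq {σ R : Type*} [CommRing R]
    {x c F G : MvPowerSeries σ R} (hx : constantCoeff x = 0)
    (hF : (F - 1) * (1 - x * F) ^ 2 = c) (hG : (G - 1) * (1 - x * G) ^ 2 = c) : F = G := by
  -- The two equations differ by `F - G` times a series with constant coefficient `1`.
  have hU : IsUnit ((1 - x * F) ^ 2 - x * (G - 1) * (2 - x * F - x * G)) :=
    isUnit_iff_constantCoeff.mpr (by simp [hx])
  have : (F - G) * ((1 - x * F) ^ 2 - x * (G - 1) * (2 - x * F - x * G)) = 0 := by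
    linear_combination hF - hG
  exact sub_eq_zero.mp (hU.mul_left_eq_zero.mp this)

/-- The generating series of rooted plane trees counted by edges
(`x`) and by the number of vertices having a child which is a leaf (`t`) satisfies
`O = (1/(1 - x(O-1))) (1 + x t (1/(1 - x O)))`, and moreover `O = B`, the generating
series of binary trees counted by vertices and hook number. -/
theorem stmt18 :
    Oser = ((1 - MvPowerSeries.X 0 * (Oser - 1))⁻¹) *
        (1 + MvPowerSeries.X 0 * MvPowerSeries.X 1 * ((1 - MvPowerSeries.X 0 * Oser)⁻¹)) ∧
    Oser = Bser := by
  rw [PTree.Oser_eq_genSeries, BT.Bser_eq_genSeries]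
  refine ⟨?_, eq_of_sub_one_mul_sq_eq (constantCoeff_X 0)
    PTree.genSeries_weight_sub_one_mul_sq BT.genSeries_weight_sub_one_mul_sq⟩
  rw [(MvPowerSeries.inv_eq_iff_mul_eq_one (by simp)).mpr PTree.genSeries_forest_mul,
    (MvPowerSeries.inv_eq_iff_mul_eq_one (by simp)).mpr PTree.genSeries_nonleafForest_mul]
  exact PTree.genSeries_weight_eq_mul
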